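/- For every positive integer n and every integer p, the sum over k from 0 to n of (-1)^{p(n-k)} * (n/(n+k)) * C(n+k, n-k) * 5^k * F_p^{2k} equals L_{2pn}/2. -/

import Mathlib

open Finset

/-- Fibonacci numbers extended to all integers: `F_{-n} = (-1)^{n-1} F_n`. -/
def fibZ (n : ℤ) : ℤ :=
  if 0 ≤ n then Nat.fib n.toNat else (-1) ^ (n.natAbs + 1) * Nat.fib n.natAbs

/-- Lucas numbers extended to all integers: `L_n = F_{n-1} + F_{n+1}`. -/
def lucasZ (n : ℤ) : ℤ := fibZ (n - 1) + fibZ (n + 1)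

/-!
Put `ε = (-1)^p`, `u = ε φ^(2p)` and `v = ε ψ^(2p)`. Then `u v = 1` and `u + v - 2 = 5 ε F_p²`,
so the sum is `ε^n ∑ₖ n/(n+k) C(n+k, n-k) (u + v - 2)^k`. The coefficients
`2n/(n+k) C(n+k, n-k) = C(n+k, 2k) + C(n+k-1, 2k)` are those of `b_n + b_(n-1)`, where `b_n` are
the Morgan–Voyce polynomials, and `b_n + b_(n-1) = C_n(X + 2)` for the Vieta–Lucas polynomial `C_n`
because both sides satisfy `y_(n+2) = (X + 2) y_(n+1) - y_n`. Since `C_n(u + v) = u^n + v^n` when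
`u v = 1`, the sum is `ε^n (u^n + v^n) / 2 = L_(2pn) / 2`.
-/

open Polynomial

theorem Nat.choose_add_two_add_choose (M r : ℕ) :
    (M + 2).choose (r + 2) + M.choose (r + 2) = M.choose r + 2 * (M + 1).choose (r + 2) := by
  simp only [Nat.choose_succ_succ]
  ring

namespace Polynomial

variable (R : Type*) [CommRing R]

noncomputable def morganVoyce (n : ℕ) : R[X] :=
  ∑ k ∈ range (n + 1), ((n + k).choose (2 * k) : R[X]) * X ^ k

variable {R}

theorem coeff_morganVoyce (n k : ℕ) : (morganVoyce R n).coeff k = (n + k).choose (2 * k) := by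
  simp only [morganVoyce, finsetSum_coeff, coeff_natCast_mul, coeff_X_pow, mul_ite, mul_one,
    mul_zero, sum_ite_eq, mem_range]
  split_ifs with h
  · rfl
  · rw [Nat.choose_eq_zero_of_lt (by omega), Nat.cast_zero]

theorem morganVoyce_add_two (n : ℕ) :
    morganVoyce R (n + 2) = (X + 2) * morganVoyce R (n + 1) - morganVoyce R n := by
  ext (_ | k)
  · norm_num [coeff_morganVoyce, mul_coeff_zero]
  · have h := congrArg (Nat.cast : ℕ → R) (Nat.choose_add_two_add_choose (n + k + 1) (2 * k))
    push_cast at h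
    simp only [coeff_sub, add_mul, coeff_add, coeff_X_mul, coeff_ofNat_mul, coeff_morganVoyce]
    linear_combination (norm := ring_nf) h

theorem morganVoyce_zero : morganVoyce R 0 = 1 := by
  simp [morganVoyce]

theorem morganVoyce_one : morganVoyce R 1 = X + 1 := by
  simp [morganVoyce, sum_range_succ, add_comm]

theorem eval_morganVoyce (n : ℕ) (x : R) :
    (morganVoyce R n).eval x = ∑ k ∈ range (n + 1), ((n + k).choose (2 * k) : R) * x ^ k := by
  simp [morganVoyce, eval_finsetSum]

theorem chebyshev_C_comp_X_add_two (n : ℕ) :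
    (Chebyshev.C R (n + 1 : ℕ)).comp (X + 2) = morganVoyce R (n + 1) + morganVoyce R n := by
  have step (m : ℤ) : (Chebyshev.C R (m + 2)).comp (X + 2) =
      (X + 2) * (Chebyshev.C R (m + 1)).comp (X + 2) - (Chebyshev.C R m).comp (X + 2) := by
    rw [Chebyshev.C_add_two, sub_comp, mul_comp, X_comp]
  induction n using Nat.twoStepInduction with
  | zero => simp [morganVoyce_zero, morganVoyce_one, add_assoc, one_add_one_eq_two]
  | one =>
    have h := morganVoyce_add_two (R := R) 0
    norm_num [morganVoyce_zero, morganVoyce_one] at h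
    norm_num [Chebyshev.C_two, h, morganVoyce_one]
    ring
  | more n ih₁ ih₂ =>
    push_cast at ih₁ ih₂ ⊢
    rw [show (n : ℤ) + 2 + 1 = (n + 1) + 2 by ring, step, ih₂, ih₁]
    linear_combination (norm := ring_nf) -morganVoyce_add_two (R := R) (n + 1) -
      morganVoyce_add_two (R := R) n

theorem sum_choose_add_choose_mul_pow (u v : R) (huv : u * v = 1) (m : ℕ) :
    ∑ k ∈ range (m + 2),
        (((m + 1 + k).choose (2 * k) + (m + k).choose (2 * k) : ℕ) : R) * (u + v - 2) ^ k =
      u ^ (m + 1) + v ^ (m + 1) := by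
  have hC : ((Chebyshev.C R (m + 1 : ℕ)).comp (X + 2)).eval (u + v - 2) =
      u ^ (m + 1) + v ^ (m + 1) := by
    rw [eval_comp, ← dickson_one_one_eq_chebyshev_C, eval_add, eval_X, eval_ofNat, sub_add_cancel,
      dickson_one_one_eval_add_inv u v huv]
  have htop : ∑ k ∈ range (m + 1), ((m + k).choose (2 * k) : R) * (u + v - 2) ^ k =
      ∑ k ∈ range (m + 2), ((m + k).choose (2 * k) : R) * (u + v - 2) ^ k := by
    rw [sum_range_succ _ (m + 1), Nat.choose_eq_zero_of_lt (by omega), Nat.cast_zero, zero_mul,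
      add_zero]
  rw [← hC, chebyshev_C_comp_X_add_two, eval_add, eval_morganVoyce, eval_morganVoyce, htop,
    ← sum_add_distrib]
  refine sum_congr rfl fun k _ => ?_
  push_cast
  ring

end Polynomial

section Field

variable {K : Type*} [Field K] [CharZero K]

theorem div_add_mul_choose_sub (m k : ℕ) (hk : k ≤ m + 1) :
    ((m + 1 : ℕ) : K) / ((m + 1 : ℕ) + k) * ((m + 1 + k).choose (m + 1 - k) : K) =
      ((m + 1 + k).choose (2 * k) + (m + k).choose (2 * k) : K) / 2 := by
  have h := Nat.choose_mul_succ_eq (m + k) (2 * k)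
  rw [show m + k + 1 - 2 * k = m + 1 - k by omega] at h
  have h' := congrArg (Nat.cast : ℕ → K) h
  have hne : (m + 1 : K) + k ≠ 0 := by exact_mod_cast (by omega : m + 1 + k ≠ 0)
  push_cast [Nat.cast_sub hk] at h'
  rw [Nat.choose_symm_of_eq_add (show m + 1 + k = (m + 1 - k) + 2 * k by omega),
    show m + 1 + k = m + k + 1 by omega]
  push_cast
  rw [div_mul_eq_mul_div, div_eq_div_iff hne two_ne_zero]
  linear_combination -h'

theorem sum_div_mul_choose_mul_pow_eq (u v : K) (huv : u * v = 1) (n : ℕ) (hn : 0 < n) :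
    ∑ k ∈ range (n + 1), (n : K) / (n + k) * ((n + k).choose (n - k) : K) * (u + v - 2) ^ k =
      (u ^ n + v ^ n) / 2 := by
  obtain ⟨m, rfl⟩ : ∃ m, n = m + 1 := ⟨n - 1, by omega⟩
  rw [eq_div_iff two_ne_zero, sum_mul, ← sum_choose_add_choose_mul_pow u v huv m]
  refine sum_congr rfl fun k hk => ?_
  rw [div_add_mul_choose_sub m k (by simpa [Nat.lt_succ_iff] using hk)]
  push_cast
  ring

end Field

open Real goldenRatio

theorem fibZ_eq_fib (n : ℤ) : fibZ n = Int.fib n := by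
  obtain ⟨m, rfl | rfl⟩ := n.eq_nat_or_neg
  · simp [fibZ]
  · simp [fibZ, Int.fib_neg_natCast]

theorem coe_lucasZ_eq (n : ℤ) : (lucasZ n : ℝ) = φ ^ n + ψ ^ n := by
  rw [lucasZ, Int.cast_add, fibZ_eq_fib, fibZ_eq_fib, coe_intFib_eq, coe_intFib_eq,
    zpow_sub_one₀ goldenRatio_ne_zero, zpow_sub_one₀ goldenConj_ne_zero,
    zpow_add_one₀ goldenRatio_ne_zero, zpow_add_one₀ goldenConj_ne_zero, inv_goldenRatio,
    inv_goldenConj, ← add_div, div_eq_iff (by positivity), ← goldenRatio_sub_goldenConj]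
  ring

theorem coe_lucasZ_two_mul (p : ℤ) :
    (lucasZ (2 * p) : ℝ) = 5 * (fibZ p : ℝ) ^ 2 + 2 * (-1) ^ p := by
  rw [coe_lucasZ_eq, fibZ_eq_fib, coe_intFib_eq, div_pow, sq_sqrt (by norm_num : (0 : ℝ) ≤ 5),
    mul_div_cancel₀ _ (by norm_num), ← goldenRatio_mul_goldenConj, mul_zpow, mul_comm 2 p,
    zpow_mul, zpow_mul]
  norm_cast
  ring

theorem stmt_8 (n : ℕ) (hn : 0 < n) (p : ℤ) :
    ∑ k ∈ range (n + 1), (-1 : ℚ) ^ (p * ((n : ℤ) - k)) *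
      ((n : ℚ) / (n + k)) * (Nat.choose (n + k) (n - k)) *
      5 ^ k * (fibZ p : ℚ) ^ (2 * k) =
    (lucasZ (2 * p * n) : ℚ) / 2 := by
  set ε : ℝ := (-1) ^ p
  have hε : ε * ε = 1 := by rw [← mul_zpow]; norm_num
  have hε_inv : ε⁻¹ = ε := inv_eq_of_mul_eq_one_right hε
  set u := ε * φ ^ (2 * p)
  set v := ε * ψ ^ (2 * p)
  have huv : u * v = 1 := by
    rw [show u * v = (ε * ε) * (φ * ψ) ^ (2 * p) by rw [mul_zpow]; ring, hε,
      goldenRatio_mul_goldenConj, zpow_mul]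
    norm_num
  have hx : u + v - 2 = ε * (5 * (fibZ p : ℝ) ^ 2) := by
    linear_combination ε * coe_lucasZ_two_mul p - ε * coe_lucasZ_eq (2 * p) + 2 * hε
  have hsign (k : ℕ) : (-1 : ℝ) ^ (p * ((n : ℤ) - k)) = ε ^ n * ε ^ k := by
    rw [zpow_mul, zpow_sub₀ (zpow_ne_zero _ (by norm_num)), zpow_natCast, zpow_natCast,
      div_eq_mul_inv, ← inv_pow, hε_inv]
  have hL : (lucasZ (2 * p * n) : ℝ) = ε ^ n * (u ^ n + v ^ n) := by
    rw [coe_lucasZ_eq, zpow_mul φ, zpow_mul ψ, zpow_natCast, zpow_natCast, mul_pow, mul_pow,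
      ← mul_add, ← mul_assoc, ← mul_pow, hε, one_pow, one_mul]
  apply Rat.cast_injective (α := ℝ)
  push_cast
  calc _ = ε ^ n * ∑ k ∈ range (n + 1),
        (n : ℝ) / (n + k) * ((n + k).choose (n - k) : ℝ) * (u + v - 2) ^ k := by
        rw [mul_sum]
        refine sum_congr rfl fun k _ => ?_
        rw [hsign, hx, mul_pow, mul_pow, pow_mul]
        ring
    _ = _ := by rw [sum_div_mul_choose_mul_pow_eq u v huv n hn, hL]; ring
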